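/- arXiv:1104.3727 — 4 statements merged into one kernel-verified Lean document; each statement's English description precedes it below -/
import Mathlib

section
/- Let C be a binary self-dual code of length n with n ≡ 6 (mod 8), let C₀ = {c ∈ C : wt(c) ≡ 0 (mod 4)}, let C₂ = C \ C₀, and let C₁ and C₃ be the two distinct cosets of C₀ whose union is the shadow S = C₀^⊥ \ C. Then the code C* = {(v,0,0) : v ∈ C₀} ∪ {(v,1,1) : v ∈ C₂} ∪ {(v,1,0) : v ∈ C₁} ∪ {(v,0,1) : v ∈ C₃} ⊆ 𝔽₂^{n+2} is a doubly even self-dual code of length n+2. -/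
/-!
Write `W = C₀^⊥`, so that `W = C₀ ∪ C₂ ∪ C₁ ∪ C₃`, and pick `a₁ ∈ C₁`, `a₃ ∈ C₃`. Shadow vectors
are orthogonal to `C₀`, pair to `1` with `C₂` and have odd weight (as `1 ∈ C₂` when
`n ≡ 2 (mod 4)`), and `a₁ + a₃ ∈ C₂`. Hence `v ↦ (v ⬝ a₁, v ⬝ a₃)` takes the values
`(0,0), (1,1), (1,0), (0,1)` on `C₀, C₂, C₁, C₃`, so `C*` is the image of `W` under the linear map
`v ↦ (v, v ⬝ a₁, v ⬝ a₃)`.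

Weights modulo 4 are `0, 2, w, w` on the four cosets. Comparing imaginary parts in the Gauss sum
`∑_{x ∈ W} i^{wt x} = (1 + i)^n`, negative for `n ≡ 6 (mod 8)`, forces `w = 3`, so `C*` is doubly
even and therefore self-orthogonal. A vector `(v, a, b)` orthogonal to `C*` has `v ∈ W` by testing
against `(C₀, 0, 0)`, and `a = v ⬝ a₁`, `b = v ⬝ a₃` by testing against the images of `a₁` and `a₃`.
-/

open Finset

/-- Hamming weight of a binary vector: number of nonzero coordinates. -/
def wt {n : ℕ} (x : Fin n → ZMod 2) : ℕ := (Finset.univ.filter fun i => x i ≠ 0).card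

/-- The dual code with respect to the standard inner product. -/
def dualCode {n : ℕ} (C : Submodule (ZMod 2) (Fin n → ZMod 2)) :
    Submodule (ZMod 2) (Fin n → ZMod 2) where
  carrier := {x | ∀ y ∈ C, ∑ i, x i * y i = 0}
  add_mem' := by
    intro a b ha hb y hy
    simp only [Set.mem_setOf_eq] at *
    simp [Pi.add_apply, add_mul, Finset.sum_add_distrib, ha y hy, hb y hy]
  zero_mem' := by intro y hy; simp
  smul_mem' := by
    intro c a ha y hy
    simp only [Set.mem_setOf_eq] at *
    simp [Pi.smul_apply, smul_eq_mul, mul_assoc, ← Finset.mul_sum, ha y hy]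

/-- A code is self-dual if it equals its dual code. -/
def isSelfDual {n : ℕ} (C : Submodule (ZMod 2) (Fin n → ZMod 2)) : Prop := dualCode C = C

/-- A code is doubly even if every codeword has weight divisible by 4. -/
def isDoublyEven {n : ℕ} (C : Submodule (ZMod 2) (Fin n → ZMod 2)) : Prop :=
  ∀ x ∈ C, 4 ∣ wt x

/-- Minimum weight of a code: the smallest weight of a nonzero codeword. -/
noncomputable def minWt {n : ℕ} (C : Submodule (ZMod 2) (Fin n → ZMod 2)) : ℕ :=
  sInf {w | ∃ x ∈ C, x ≠ 0 ∧ wt x = w}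

/-- The linear map on `Fin n → ZMod 2` given by permuting coordinates. -/
def permMap {n : ℕ} (σ : Equiv.Perm (Fin n)) :
    (Fin n → ZMod 2) →ₗ[ZMod 2] (Fin n → ZMod 2) :=
  LinearMap.funLeft (ZMod 2) (ZMod 2) σ

/-- Equivalence of codes: one is obtained from the other by permuting coordinates. -/
def codeEquiv {n : ℕ} (C C' : Submodule (ZMod 2) (Fin n → ZMod 2)) : Prop :=
  ∃ σ : Equiv.Perm (Fin n), Submodule.map (permMap σ) C = C'

/-- The dual of a set of vectors with respect to the standard inner product. -/
def dualSet {n : ℕ} (s : Set (Fin n → ZMod 2)) : Set (Fin n → ZMod 2) :=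
  {x | ∀ y ∈ s, ∑ i, x i * y i = 0}

open Matrix

section Weight

lemma zmod_two_eq_zero_or_eq_one (a : ZMod 2) : a = 0 ∨ a = 1 := by
  revert a; decide

lemma zmod_two_eq_one_of_ne_zero {a : ZMod 2} (h : a ≠ 0) : a = 1 :=
  (zmod_two_eq_zero_or_eq_one a).resolve_left h

variable {n : ℕ}

lemma one_dotProduct_eq_dotProduct_self (x : Fin n → ZMod 2) : 1 ⬝ᵥ x = x ⬝ᵥ x := by
  refine Finset.sum_congr rfl fun i _ => ?_
  rw [Pi.one_apply]
  generalize x i = a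
  revert a; decide

lemma wt_eq_sum_val (x : Fin n → ZMod 2) : wt x = ∑ i, (x i).val := by
  rw [wt, Finset.card_filter]
  refine Finset.sum_congr rfl fun i _ => ?_
  generalize x i = a
  fin_cases a <;> rfl

lemma wt_snoc (x : Fin n → ZMod 2) (a : ZMod 2) :
    wt (Fin.snoc x a : Fin (n + 1) → ZMod 2) = wt x + a.val := by
  simp [wt_eq_sum_val, Fin.sum_univ_castSucc]

lemma wt_one : wt (1 : Fin n → ZMod 2) = n := by
  simp [wt]

lemma dotProduct_self_eq_wt (x : Fin n → ZMod 2) : x ⬝ᵥ x = wt x := by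
  rw [wt_eq_sum_val, Nat.cast_sum, dotProduct]
  refine Finset.sum_congr rfl fun i _ => ?_
  generalize x i = a
  fin_cases a <;> rfl

lemma snoc_dotProduct_snoc (x y : Fin n → ZMod 2) (a b : ZMod 2) :
    (Fin.snoc x a : Fin (n + 1) → ZMod 2) ⬝ᵥ Fin.snoc y b = x ⬝ᵥ y + a * b := by
  simp [dotProduct, Fin.sum_univ_castSucc]

lemma snoc_add_snoc (x y : Fin n → ZMod 2) (a b : ZMod 2) :
    (Fin.snoc x a : Fin (n + 1) → ZMod 2) + Fin.snoc y b = Fin.snoc (x + y) (a + b) := by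
  ext i
  induction i using Fin.lastCases <;> simp

lemma smul_snoc (c : ZMod 2) (x : Fin n → ZMod 2) (a : ZMod 2) :
    c • (Fin.snoc x a : Fin (n + 1) → ZMod 2) = Fin.snoc (c • x) (c • a) := by
  ext i
  induction i using Fin.lastCases <;> simp

/-- `|x + y| = |x| + |y| - 2 |x ∩ y|` and `|x ∩ y| ≡ x ⬝ y (mod 2)`. -/
lemma wt_add_cast_zmod_four (x y : Fin n → ZMod 2) :
    (wt (x + y) : ZMod 4) = wt x + wt y + 2 * (x ⬝ᵥ y).val := by
  let double : ZMod 2 →+ ZMod 4 := AddMonoidHom.mk' (fun a => 2 * (a.val : ZMod 4)) (by decide)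
  have hdouble : 2 * ((x ⬝ᵥ y).val : ZMod 4) = ∑ i, 2 * ((x i * y i).val : ZMod 4) :=
    map_sum double _ _
  simp only [wt_eq_sum_val, Nat.cast_sum, hdouble, ← Finset.sum_add_distrib]
  refine Finset.sum_congr rfl fun i _ => ?_
  simp only [Pi.add_apply]
  generalize x i = a; generalize y i = b
  revert a b; decide

end Weight

section Codes

variable {n : ℕ} {C : Submodule (ZMod 2) (Fin n → ZMod 2)}

lemma mem_dualCode_iff {x : Fin n → ZMod 2} :
    x ∈ dualCode C ↔ ∀ y ∈ C, x ⬝ᵥ y = 0 := Iff.rfl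

lemma dualCode_anti {D : Submodule (ZMod 2) (Fin n → ZMod 2)} (h : C ≤ D) :
    dualCode D ≤ dualCode C :=
  fun _ hx y hy => hx y (h hy)

lemma le_dualCode_of_isDoublyEven (hC : isDoublyEven C) : C ≤ dualCode C := by
  intro x hx y hy
  have h := wt_add_cast_zmod_four x y
  simp only [(ZMod.natCast_eq_zero_iff _ 4).2, hC _ hx, hC _ hy, hC _ (C.add_mem hx hy),
    zero_add] at h
  change x ⬝ᵥ y = 0
  generalize x ⬝ᵥ y = a at h ⊢
  revert a; decide

lemma wt_add_cast_zmod_four_of_dotProduct_eq_zero {x y : Fin n → ZMod 2} (h : x ⬝ᵥ y = 0) :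
    (wt (x + y) : ZMod 4) = wt x + wt y := by
  simp [wt_add_cast_zmod_four, h]

def doublyEvenSubcode (C : Submodule (ZMod 2) (Fin n → ZMod 2)) (hC : C ≤ dualCode C) :
    Submodule (ZMod 2) (Fin n → ZMod 2) where
  carrier := {c | c ∈ C ∧ 4 ∣ wt c}
  add_mem' := by
    rintro x y ⟨hxC, hx⟩ ⟨hyC, hy⟩
    refine ⟨C.add_mem hxC hyC, ?_⟩
    rw [← ZMod.natCast_eq_zero_iff _ 4] at hx hy ⊢
    rw [wt_add_cast_zmod_four_of_dotProduct_eq_zero (hC hxC y hyC), hx, hy, add_zero]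
  zero_mem' := ⟨C.zero_mem, by simp [wt]⟩
  smul_mem' := by
    rintro c x hx
    obtain rfl | rfl := zmod_two_eq_zero_or_eq_one c
    · simp [wt]
    · simpa using hx

lemma isDoublyEven_doublyEvenSubcode (hC : C ≤ dualCode C) :
    isDoublyEven (doublyEvenSubcode C hC) :=
  fun _ hx => hx.2

end Codes

section SelfDual

variable {n : ℕ} {C : Submodule (ZMod 2) (Fin n → ZMod 2)}

lemma two_dvd_wt_of_le_dualCode (hC : C ≤ dualCode C) {x : Fin n → ZMod 2} (hx : x ∈ C) :
    2 ∣ wt x :=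
  (ZMod.natCast_eq_zero_iff _ 2).1 <| by rw [← dotProduct_self_eq_wt]; exact hC hx x hx

lemma wt_cast_zmod_four_eq_two (hC : C ≤ dualCode C) {x : Fin n → ZMod 2} (hx : x ∈ C)
    (hx₀ : x ∉ doublyEvenSubcode C hC) : (wt x : ZMod 4) = 2 := by
  have heven := two_dvd_wt_of_le_dualCode hC hx
  have hmod : wt x % 4 = 2 := by
    have : ¬ 4 ∣ wt x := fun h => hx₀ ⟨hx, h⟩
    omega
  rw [← ZMod.natCast_mod, hmod]; rfl

lemma add_mem_doublyEvenSubcode_of_not_mem (hC : C ≤ dualCode C) {x y : Fin n → ZMod 2}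
    (hx : x ∈ C) (hx₀ : x ∉ doublyEvenSubcode C hC) (hy : y ∈ C)
    (hy₀ : y ∉ doublyEvenSubcode C hC) : x + y ∈ doublyEvenSubcode C hC := by
  refine ⟨C.add_mem hx hy, (ZMod.natCast_eq_zero_iff _ 4).1 ?_⟩
  rw [wt_add_cast_zmod_four_of_dotProduct_eq_zero (hC hx y hy),
    wt_cast_zmod_four_eq_two hC hx hx₀, wt_cast_zmod_four_eq_two hC hy hy₀]
  rfl

lemma one_mem_of_isSelfDual (hC : isSelfDual C) : (1 : Fin n → ZMod 2) ∈ C := by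
  rw [← hC]
  intro y hy
  change 1 ⬝ᵥ y = 0
  rw [one_dotProduct_eq_dotProduct_self]
  exact hC.ge hy y hy

lemma dotProduct_eq_one_of_mem_shadow (hC : isSelfDual C) {s c : Fin n → ZMod 2}
    (hs : s ∈ dualCode (doublyEvenSubcode C hC.ge)) (hsC : s ∉ C) (hc : c ∈ C)
    (hc₀ : c ∉ doublyEvenSubcode C hC.ge) : s ⬝ᵥ c = 1 := by
  rw [← hC] at hsC
  obtain ⟨y, hy, hsy⟩ : ∃ y ∈ C, s ⬝ᵥ y ≠ 0 := by
    simpa [mem_dualCode_iff] using hsC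
  have hy₀ : y ∉ doublyEvenSubcode C hC.ge := fun hy₀ => hsy (hs y hy₀)
  have hcy := add_mem_doublyEvenSubcode_of_not_mem hC.ge hc hc₀ hy hy₀
  calc s ⬝ᵥ c = s ⬝ᵥ (c + y) + s ⬝ᵥ y := by
        rw [← dotProduct_add, add_assoc, ZModModule.add_self, add_zero]
    _ = 1 := by rw [mem_dualCode_iff.1 hs _ hcy, zmod_two_eq_one_of_ne_zero hsy, zero_add]

lemma dotProduct_self_of_mem_shadow (hC : isSelfDual C) (hn : n % 4 = 2) {s : Fin n → ZMod 2}
    (hs : s ∈ dualCode (doublyEvenSubcode C hC.ge)) (hsC : s ∉ C) : s ⬝ᵥ s = 1 := by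
  have hone₀ : (1 : Fin n → ZMod 2) ∉ doublyEvenSubcode C hC.ge := fun h => by
    have := h.2; rw [wt_one] at this; omega
  rw [← one_dotProduct_eq_dotProduct_self, dotProduct_comm]
  exact dotProduct_eq_one_of_mem_shadow hC hs hsC (one_mem_of_isSelfDual hC) hone₀

end SelfDual

section GaussSum

open Complex

open scoped Classical

variable {n : ℕ}

lemma sum_zmod_two {M : Type*} [AddCommMonoid M] (f : ZMod 2 → M) : ∑ a, f a = f 0 + f 1 :=
  Fin.sum_univ_two f

def signChar : AddChar (ZMod 2) ℂ where
  toFun a := (-1) ^ a.val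
  map_zero_eq_one' := by simp
  map_add_eq_mul' a b := by rw [ZMod.val_add, ← neg_one_pow_eq_pow_mod_two, pow_add]

lemma signChar_apply (a : ZMod 2) : signChar a = (-1) ^ a.val := rfl

lemma signChar_eq_one_iff {a : ZMod 2} : signChar a = 1 ↔ a = 0 := by
  obtain rfl | rfl := zmod_two_eq_zero_or_eq_one a <;>
    norm_num [signChar_apply, show (1 : ZMod 2).val = 1 from rfl]

lemma AddChar.map_sum_eq_prod' {ι A M : Type*} [AddCommMonoid A] [CommMonoid M]
    (ψ : AddChar A M) (s : Finset ι) (f : ι → A) : ψ (∑ i ∈ s, f i) = ∏ i ∈ s, ψ (f i) :=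
  map_prod ψ.toMonoidHom (fun i => Multiplicative.ofAdd (f i)) s

lemma sum_signChar_dotProduct (D : Submodule (ZMod 2) (Fin n → ZMod 2)) (x : Fin n → ZMod 2) :
    ∑ c : D, signChar (x ⬝ᵥ c) = if x ∈ dualCode D then (Fintype.card D : ℂ) else 0 := by
  let ψ : AddChar D ℂ := signChar.compAddMonoidHom
    (AddMonoidHom.mk' (fun c : D => x ⬝ᵥ (c : Fin n → ZMod 2)) fun a b => by simp [dotProduct_add])
  have hψ : ψ = 0 ↔ x ∈ dualCode D := by
    simp [ψ, AddChar.eq_zero_iff, signChar_eq_one_iff, mem_dualCode_iff]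
  change ∑ c, ψ c = _
  simp only [AddChar.sum_eq_ite, hψ]

lemma sum_I_pow_wt_mul_signChar (c : Fin n → ZMod 2) :
    ∑ x : Fin n → ZMod 2, I ^ wt x * signChar (x ⬝ᵥ c) = (1 + I) ^ n * (-I) ^ wt c :=
  calc ∑ x : Fin n → ZMod 2, I ^ wt x * signChar (x ⬝ᵥ c)
      = ∑ x : Fin n → ZMod 2, ∏ i, I ^ (x i).val * signChar (x i * c i) := by
        simp only [wt_eq_sum_val, ← Finset.prod_pow_eq_pow_sum, dotProduct,
          AddChar.map_sum_eq_prod', Finset.prod_mul_distrib]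
    _ = ∏ i, ∑ a : ZMod 2, I ^ a.val * signChar (a * c i) := by
        rw [Finset.prod_univ_sum, Fintype.piFinset_univ]
    _ = ∏ i, (1 + I) * (-I) ^ (c i).val := by
        refine Finset.prod_congr rfl fun i _ => ?_
        have hval : (1 : ZMod 2).val = 1 := rfl
        obtain h | h := zmod_two_eq_zero_or_eq_one (c i)
        · simp [h, sum_zmod_two, hval]
        · simp only [h, sum_zmod_two, signChar_apply, hval, mul_one, ZMod.val_zero]
          linear_combination I_sq
    _ = (1 + I) ^ n * (-I) ^ wt c := by
        rw [Finset.prod_mul_distrib, Finset.prod_const, Finset.card_univ, Fintype.card_fin,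
          Finset.prod_pow_eq_pow_sum, wt_eq_sum_val]

theorem sum_I_pow_wt_dualCode {D : Submodule (ZMod 2) (Fin n → ZMod 2)} (hD : isDoublyEven D) :
    ∑ x ∈ univ.filter (· ∈ dualCode D), I ^ wt x = (1 + I) ^ n := by
  have hcard : (Fintype.card D : ℂ) ≠ 0 := Nat.cast_ne_zero.2 Fintype.card_ne_zero
  apply mul_left_cancel₀ hcard
  calc (Fintype.card D : ℂ) * ∑ x ∈ univ.filter (· ∈ dualCode D), I ^ wt x
      = ∑ x : Fin n → ZMod 2, I ^ wt x * ∑ c : D, signChar (x ⬝ᵥ c) := by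
        simp only [sum_signChar_dotProduct, mul_ite, mul_zero, ← Finset.sum_filter,
          Finset.mul_sum, mul_comm]
    _ = ∑ c : D, ∑ x : Fin n → ZMod 2, I ^ wt x * signChar (x ⬝ᵥ c) := by
        simp only [Finset.mul_sum]
        exact Finset.sum_comm
    _ = ∑ _c : D, (1 + I) ^ n := by
        refine Finset.sum_congr rfl fun c _ => ?_
        obtain ⟨k, hk⟩ := hD c c.2
        rw [sum_I_pow_wt_mul_signChar, hk, pow_mul, Even.neg_pow (by decide), I_pow_four,
          one_pow, mul_one]
    _ = Fintype.card D * (1 + I) ^ n := by simp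

lemma I_pow_eq_I_pow_val {m : ℕ} {w : ZMod 4} (h : (m : ZMod 4) = w) : I ^ m = I ^ w.val := by
  rw [I_pow_eq_pow_mod, ← h, ZMod.val_natCast]

lemma im_one_add_I_pow_neg (hn : n % 8 = 6) : ((1 + I) ^ n).im < 0 := by
  obtain ⟨k, rfl⟩ : ∃ k, n = 2 * (4 * k + 3) := ⟨n / 8, by omega⟩
  rw [pow_mul, show (1 + I) ^ 2 = 2 * I by linear_combination I_sq, mul_pow, I_pow_eq_pow_mod,
    show (4 * k + 3) % 4 = 3 by omega, I_pow_three, ← ofReal_ofNat, ← ofReal_pow, mul_neg, neg_im,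
    im_ofReal_mul, I_im, mul_one, Left.neg_neg_iff]
  positivity

/-- Only vectors outside `E` contribute to the imaginary part of `(1 + i) ^ n`, and that
imaginary part is negative. -/
theorem wt_cast_zmod_four_eq_three (hn : n % 8 = 6) {D : Submodule (ZMod 2) (Fin n → ZMod 2)}
    (hD : isDoublyEven D) {E : Set (Fin n → ZMod 2)} (hE : ∀ x ∈ E, 2 ∣ wt x) {w : ZMod 4}
    (hw : ∀ x ∈ dualCode D, x ∉ E → (wt x : ZMod 4) = w) : w = 3 := by
  set S := univ.filter (· ∈ dualCode D)
  have hsplit := Finset.sum_filter_add_sum_filter_not S (· ∈ E) (fun x => I ^ wt x)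
  rw [sum_I_pow_wt_dualCode hD] at hsplit
  have hreal : (∑ x ∈ S.filter (· ∈ E), I ^ wt x).im = 0 := by
    rw [Complex.im_sum]
    refine Finset.sum_eq_zero fun x hx => ?_
    obtain ⟨k, hk⟩ := hE x (Finset.mem_filter.1 hx).2
    rw [hk, pow_mul, I_sq]
    norm_cast
  have hrest : ∑ x ∈ S.filter (· ∉ E), I ^ wt x = (S.filter (· ∉ E)).card * I ^ w.val := by
    rw [Finset.sum_congr rfl fun x hx => I_pow_eq_I_pow_val (hw x ?_ ?_), Finset.sum_const,
      nsmul_eq_mul]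
    all_goals simp_all [S]
  have him : (I ^ w.val).im < 0 := by
    have := im_one_add_I_pow_neg hn
    rw [← hsplit, add_im, hreal, zero_add, hrest, mul_im, natCast_re, natCast_im, zero_mul,
      add_zero] at this
    exact neg_of_mul_neg_right this (Nat.cast_nonneg _)
  fin_cases w <;> first | rfl | norm_num [ZMod.val, pow_succ] at him

end GaussSum

section Augment

variable {n : ℕ}

def augment (p q : Fin n → ZMod 2) :
    (Fin n → ZMod 2) →ₗ[ZMod 2] (Fin (n + 2) → ZMod 2) where
  toFun v := Fin.snoc (Fin.snoc v (v ⬝ᵥ p)) (v ⬝ᵥ q)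
  map_add' x y := by simp only [snoc_add_snoc, add_dotProduct]
  map_smul' c x := by simp only [smul_snoc, smul_dotProduct, RingHom.id_apply]

lemma augment_apply (p q v : Fin n → ZMod 2) :
    augment p q v = Fin.snoc (Fin.snoc v (v ⬝ᵥ p)) (v ⬝ᵥ q) := rfl

theorem dualCode_map_augment_le {D₀ : Submodule (ZMod 2) (Fin n → ZMod 2)}
    (hD₀ : D₀ ≤ dualCode D₀) {p q : Fin n → ZMod 2} (hp : p ∈ dualCode D₀)
    (hq : q ∈ dualCode D₀) (hpp : p ⬝ᵥ p = 1) (hqq : q ⬝ᵥ q = 1) (hpq : p ⬝ᵥ q = 0) :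
    dualCode ((dualCode D₀).map (augment p q)) ≤ (dualCode D₀).map (augment p q) := by
  intro z hz
  obtain ⟨v, a, b, rfl⟩ : ∃ v a b, z = Fin.snoc (Fin.snoc v a) b :=
    ⟨_, _, _, by rw [Fin.snoc_init_self, Fin.snoc_init_self]⟩
  have hdot : ∀ x ∈ dualCode D₀, v ⬝ᵥ x + a * (x ⬝ᵥ p) + b * (x ⬝ᵥ q) = 0 := fun x hx => by
    rw [← snoc_dotProduct_snoc, ← snoc_dotProduct_snoc]
    exact hz _ ⟨x, hx, rfl⟩
  have hv : v ∈ dualCode D₀ := mem_dualCode_iff.2 fun c hc => by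
    simpa [dotProduct_comm c, mem_dualCode_iff.1 hp c hc, mem_dualCode_iff.1 hq c hc] using
      hdot c (hD₀ hc)
  have ha : v ⬝ᵥ p = a := CharTwo.add_eq_zero.1 (by simpa [hpp, hpq] using hdot p hp)
  have hb : v ⬝ᵥ q = b :=
    CharTwo.add_eq_zero.1 (by simpa [hqq, dotProduct_comm q p, hpq] using hdot q hq)
  exact ⟨v, hv, by rw [augment_apply, ha, hb]⟩

/-- The paper's `C*` is `brualdiPlessSet C₀ C₂ C₁ C₃`. -/
def brualdiPlessSet (A B P Q : Set (Fin n → ZMod 2)) : Set (Fin (n + 2) → ZMod 2) :=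
  (fun v => Fin.snoc (Fin.snoc v (0 : ZMod 2)) (0 : ZMod 2)) '' A ∪
    (fun v => Fin.snoc (Fin.snoc v (1 : ZMod 2)) (1 : ZMod 2)) '' B ∪
    (fun v => Fin.snoc (Fin.snoc v (1 : ZMod 2)) (0 : ZMod 2)) '' P ∪
    (fun v => Fin.snoc (Fin.snoc v (0 : ZMod 2)) (1 : ZMod 2)) '' Q

lemma isDoublyEven_of_coe_eq_brualdiPlessSet {D : Submodule (ZMod 2) (Fin (n + 2) → ZMod 2)}
    {A B P Q : Set (Fin n → ZMod 2)} (hD : (D : Set _) = brualdiPlessSet A B P Q)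
    (hA : ∀ v ∈ A, (wt v : ZMod 4) = 0) (hB : ∀ v ∈ B, (wt v : ZMod 4) = 2)
    (hP : ∀ v ∈ P, (wt v : ZMod 4) = 3) (hQ : ∀ v ∈ Q, (wt v : ZMod 4) = 3) :
    isDoublyEven D := by
  intro z hz
  rw [← SetLike.mem_coe, hD] at hz
  rw [← ZMod.natCast_eq_zero_iff _ 4]
  rcases hz with (((⟨v, hv, rfl⟩ | ⟨v, hv, rfl⟩) | ⟨v, hv, rfl⟩) | ⟨v, hv, rfl⟩) <;>
    simp only [wt_snoc, Nat.cast_add]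
  · rw [hA v hv]; rfl
  · rw [hB v hv]; rfl
  · rw [hP v hv]; rfl
  · rw [hQ v hv]; rfl

end Augment

section ShadowCosets

lemma self_mem_image_add_left {M : Type*} [AddCommGroup M] [Module (ZMod 2) M]
    (S : Submodule (ZMod 2) M) (a : M) : a ∈ (a + ·) '' (S : Set M) :=
  ⟨0, S.zero_mem, add_zero a⟩

lemma image_add_left_eq_of_add_mem {M : Type*} [AddCommGroup M] [Module (ZMod 2) M]
    (S : Submodule (ZMod 2) M) {a b : M} (h : a + b ∈ S) :
    (a + ·) '' (S : Set M) = (b + ·) '' S := by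
  ext x
  simp only [Set.image_add_left, Set.mem_preimage, SetLike.mem_coe, ZModModule.neg_eq_self]
  refine ⟨fun hx => ?_, fun hx => ?_⟩
  · simpa [add_comm a b, ZModModule.add_add_add_cancel] using S.add_mem h hx
  · simpa [ZModModule.add_add_add_cancel] using S.add_mem h hx

variable {n : ℕ}

lemma dotProduct_of_mem_image_add_left {D : Submodule (ZMod 2) (Fin n → ZMod 2)}
    {a p x : Fin n → ZMod 2} (hp : p ∈ dualCode D) (hx : x ∈ (a + ·) '' (D : Set _)) :
    x ⬝ᵥ p = a ⬝ᵥ p := by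
  obtain ⟨c, hc, rfl⟩ := hx
  rw [add_dotProduct, dotProduct_comm c, mem_dualCode_iff.1 hp c hc, add_zero]

lemma wt_cast_of_mem_image_add_left {D : Submodule (ZMod 2) (Fin n → ZMod 2)}
    (hD : isDoublyEven D) {a x : Fin n → ZMod 2} (ha : a ∈ dualCode D)
    (hx : x ∈ (a + ·) '' (D : Set _)) : (wt x : ZMod 4) = wt a := by
  obtain ⟨c, hc, rfl⟩ := hx
  rw [wt_add_cast_zmod_four_of_dotProduct_eq_zero (ha c hc),
    (ZMod.natCast_eq_zero_iff _ 4).2 (hD c hc), add_zero]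

variable {C : Submodule (ZMod 2) (Fin n → ZMod 2)} (hC : isSelfDual C)

local notation "C₀" => doublyEvenSubcode C hC.ge

lemma dotProduct_eq_zero_of_add_mem (hn : n % 4 = 2) {s t : Fin n → ZMod 2}
    (hs : s ∈ dualCode C₀) (hsC : s ∉ C) (hst : s + t ∈ C) (hst₀ : s + t ∉ C₀) :
    s ⬝ᵥ t = 0 := by
  have h := dotProduct_add s s (s + t)
  rw [← add_assoc, ZModModule.add_self, zero_add, dotProduct_self_of_mem_shadow hC hn hs hsC,
    dotProduct_eq_one_of_mem_shadow hC hs hsC hst hst₀] at h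
  rw [h]; rfl

lemma wt_cast_eq_of_add_mem {s t : Fin n → ZMod 2} (hs : s ∈ dualCode C₀) (hsC : s ∉ C)
    (hst : s + t ∈ C) (hst₀ : s + t ∉ C₀) : (wt t : ZMod 4) = wt s := by
  have h := wt_add_cast_zmod_four s (s + t)
  rw [← add_assoc, ZModModule.add_self, zero_add, wt_cast_zmod_four_eq_two hC.ge hst hst₀,
    dotProduct_eq_one_of_mem_shadow hC hs hsC hst hst₀] at h
  rw [h, add_assoc]
  exact add_eq_left.2 rfl

/-- The shadow `C₀^⊥ \ C` is the union of the cosets `a₁ + C₀ ≠ a₃ + C₀`; distinctness is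
recorded as `a₁ + a₃ ∈ C \ C₀`. -/
structure IsShadowCosetPair (a₁ a₃ : Fin n → ZMod 2) : Prop where
  union_eq : (a₁ + ·) '' (C₀ : Set _) ∪ (a₃ + ·) '' C₀ = (dualCode C₀ : Set _) \ C
  add_mem : a₁ + a₃ ∈ C
  add_not_mem : a₁ + a₃ ∉ C₀

lemma isShadowCosetPair_of_ne {a₁ a₃ : Fin n → ZMod 2}
    (hS : (a₁ + ·) '' (C₀ : Set _) ∪ (a₃ + ·) '' C₀ = (dualCode C₀ : Set _) \ C)
    (hne : (a₁ + ·) '' (C₀ : Set _) ≠ (a₃ + ·) '' C₀) : IsShadowCosetPair hC a₁ a₃ := by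
  have ha₁ : a₁ ∈ (dualCode C₀ : Set _) \ C := hS ▸ Or.inl (self_mem_image_add_left _ a₁)
  have ha₃ : a₃ ∈ (dualCode C₀ : Set _) \ C := hS ▸ Or.inr (self_mem_image_add_left _ a₃)
  refine ⟨hS, by_contra fun hC₁₃ => ?_, fun h => hne (image_add_left_eq_of_add_mem _ h)⟩
  have h₁₃ : a₁ + a₃ ∈ (a₁ + ·) '' (C₀ : Set _) ∪ (a₃ + ·) '' C₀ :=
    hS ▸ ⟨add_mem ha₁.1 ha₃.1, hC₁₃⟩
  rcases h₁₃ with ⟨c, hc, hca⟩ | ⟨c, hc, hca⟩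
  · exact ha₃.2 (add_left_cancel hca ▸ hc.1)
  · exact ha₁.2 (add_left_cancel (hca.trans (add_comm a₁ a₃)) ▸ hc.1)

namespace IsShadowCosetPair

variable {hC} {a₁ a₃ : Fin n → ZMod 2}

lemma left_mem (h : IsShadowCosetPair hC a₁ a₃) : a₁ ∈ (dualCode C₀ : Set _) \ C :=
  h.union_eq ▸ Or.inl (self_mem_image_add_left _ a₁)

lemma right_mem (h : IsShadowCosetPair hC a₁ a₃) : a₃ ∈ (dualCode C₀ : Set _) \ C :=
  h.union_eq ▸ Or.inr (self_mem_image_add_left _ a₃)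

lemma dotProduct_left_self (h : IsShadowCosetPair hC a₁ a₃) (hn : n % 4 = 2) :
    a₁ ⬝ᵥ a₁ = 1 :=
  dotProduct_self_of_mem_shadow hC hn h.left_mem.1 h.left_mem.2

lemma dotProduct_right_self (h : IsShadowCosetPair hC a₁ a₃) (hn : n % 4 = 2) :
    a₃ ⬝ᵥ a₃ = 1 :=
  dotProduct_self_of_mem_shadow hC hn h.right_mem.1 h.right_mem.2

lemma dotProduct_left_right (h : IsShadowCosetPair hC a₁ a₃) (hn : n % 4 = 2) :
    a₁ ⬝ᵥ a₃ = 0 :=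
  dotProduct_eq_zero_of_add_mem hC hn h.left_mem.1 h.left_mem.2 h.add_mem h.add_not_mem

lemma wt_right (h : IsShadowCosetPair hC a₁ a₃) : (wt a₃ : ZMod 4) = wt a₁ :=
  wt_cast_eq_of_add_mem hC h.left_mem.1 h.left_mem.2 h.add_mem h.add_not_mem

lemma wt_left (h : IsShadowCosetPair hC a₁ a₃) (hn : n % 8 = 6) : (wt a₁ : ZMod 4) = 3 := by
  have hC₀ := isDoublyEven_doublyEvenSubcode hC.ge
  refine wt_cast_zmod_four_eq_three hn hC₀ (fun x hx => two_dvd_wt_of_le_dualCode hC.ge hx)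
    fun x hx hxC => ?_
  have hx' : x ∈ (a₁ + ·) '' (C₀ : Set _) ∪ (a₃ + ·) '' C₀ := h.union_eq ▸ ⟨hx, hxC⟩
  rcases hx' with hx' | hx'
  · exact wt_cast_of_mem_image_add_left hC₀ h.left_mem.1 hx'
  · rw [wt_cast_of_mem_image_add_left hC₀ h.right_mem.1 hx', h.wt_right]

theorem coe_map_augment (h : IsShadowCosetPair hC a₁ a₃) (hn : n % 4 = 2) :
    ((dualCode C₀).map (augment a₁ a₃) : Set (Fin (n + 2) → ZMod 2)) =
      brualdiPlessSet C₀ (C \ C₀) ((a₁ + ·) '' C₀) ((a₃ + ·) '' C₀) := by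
  obtain ⟨ha₁, ha₁C⟩ := h.left_mem
  obtain ⟨ha₃, ha₃C⟩ := h.right_mem
  have hW : (dualCode C₀ : Set (Fin n → ZMod 2)) =
      (C₀ : Set _) ∪ ((C : Set _) \ C₀) ∪ (a₁ + ·) '' C₀ ∪ (a₃ + ·) '' C₀ := by
    have hC₀C : C₀ ≤ C := fun c hc => hc.1
    rw [Set.union_assoc _ ((a₁ + ·) '' _), h.union_eq, Set.union_sdiff_cancel hC₀C,
      Set.union_sdiff_cancel (hC.symm.le.trans (dualCode_anti hC₀C))]
  rw [Submodule.map_coe, hW, brualdiPlessSet, Set.image_union, Set.image_union, Set.image_union]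
  refine congr_arg₂ _ (congr_arg₂ _ (congr_arg₂ _ ?_ ?_) ?_) ?_ <;>
    refine Set.EqOn.image_eq fun v hv => ?_ <;> rw [augment_apply]
  · rw [dotProduct_comm, mem_dualCode_iff.1 ha₁ v hv, dotProduct_comm, mem_dualCode_iff.1 ha₃ v hv]
  · rw [dotProduct_comm, dotProduct_eq_one_of_mem_shadow hC ha₁ ha₁C hv.1 hv.2, dotProduct_comm,
      dotProduct_eq_one_of_mem_shadow hC ha₃ ha₃C hv.1 hv.2]
  · rw [dotProduct_of_mem_image_add_left ha₁ hv, dotProduct_of_mem_image_add_left ha₃ hv,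
      h.dotProduct_left_self hn, h.dotProduct_left_right hn]
  · rw [dotProduct_of_mem_image_add_left ha₁ hv, dotProduct_of_mem_image_add_left ha₃ hv,
      dotProduct_comm, h.dotProduct_left_right hn, h.dotProduct_right_self hn]

theorem isDoublyEven_map_augment (h : IsShadowCosetPair hC a₁ a₃) (hn : n % 8 = 6) :
    isDoublyEven ((dualCode C₀).map (augment a₁ a₃)) := by
  have hC₀ := isDoublyEven_doublyEvenSubcode hC.ge
  refine isDoublyEven_of_coe_eq_brualdiPlessSet (h.coe_map_augment (by omega))
    (fun v hv => (ZMod.natCast_eq_zero_iff _ 4).2 (hC₀ v hv))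
    (fun v hv => wt_cast_zmod_four_eq_two hC.ge hv.1 hv.2) (fun v hv => ?_) (fun v hv => ?_)
  · rw [wt_cast_of_mem_image_add_left hC₀ h.left_mem.1 hv, h.wt_left hn]
  · rw [wt_cast_of_mem_image_add_left hC₀ h.right_mem.1 hv, h.wt_right, h.wt_left hn]

theorem isSelfDual_map_augment (h : IsShadowCosetPair hC a₁ a₃) (hn : n % 8 = 6) :
    isSelfDual ((dualCode C₀).map (augment a₁ a₃)) :=
  le_antisymm
    (dualCode_map_augment_le (le_dualCode_of_isDoublyEven (isDoublyEven_doublyEvenSubcode hC.ge))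
      h.left_mem.1 h.right_mem.1 (h.dotProduct_left_self (by omega))
      (h.dotProduct_right_self (by omega)) (h.dotProduct_left_right (by omega)))
    (le_dualCode_of_isDoublyEven (h.isDoublyEven_map_augment hn))

end IsShadowCosetPair

end ShadowCosets

/-- Brualdi--Pless: for a self-dual code `C` of length `n ≡ 6 (mod 8)`, with
`C₀` the doubly even subcode, `C₂ = C \ C₀` and `C₁, C₃` the two distinct cosets
of `C₀` making up the shadow `C₀^⊥ \ C`, the set
`C* = (C₀,0,0) ∪ (C₂,1,1) ∪ (C₁,1,0) ∪ (C₃,0,1)` is a doubly even self-dual code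
of length `n + 2`. -/
theorem brualdi_pless_construction {n : ℕ}
    (C : Submodule (ZMod 2) (Fin n → ZMod 2))
    (hSD : isSelfDual C) (hn : n % 8 = 6)
    (C₀ : Set (Fin n → ZMod 2)) (hC₀ : C₀ = {c | c ∈ C ∧ 4 ∣ wt c})
    (C₁ C₃ : Set (Fin n → ZMod 2))
    (hC₁ : ∃ a, C₁ = (a + ·) '' C₀)
    (hC₃ : ∃ a, C₃ = (a + ·) '' C₀)
    (hne : C₁ ≠ C₃)
    (hshadow : C₁ ∪ C₃ = dualSet C₀ \ ↑C) :
    ∃ D : Submodule (ZMod 2) (Fin (n + 2) → ZMod 2),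
      (↑D : Set (Fin (n + 2) → ZMod 2)) =
          (fun v => Fin.snoc (Fin.snoc v (0 : ZMod 2)) (0 : ZMod 2)) '' C₀ ∪
          (fun v => Fin.snoc (Fin.snoc v (1 : ZMod 2)) (1 : ZMod 2)) '' ((↑C : Set _) \ C₀) ∪
          (fun v => Fin.snoc (Fin.snoc v (1 : ZMod 2)) (0 : ZMod 2)) '' C₁ ∪
          (fun v => Fin.snoc (Fin.snoc v (0 : ZMod 2)) (1 : ZMod 2)) '' C₃ ∧
      isSelfDual D ∧ isDoublyEven D := by
  obtain ⟨a₁, rfl⟩ := hC₁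
  obtain ⟨a₃, rfl⟩ := hC₃
  subst hC₀
  have h : IsShadowCosetPair hSD a₁ a₃ := isShadowCosetPair_of_ne hSD hshadow hne
  exact ⟨_, h.coe_map_augment (by omega), h.isSelfDual_map_augment hn,
    h.isDoublyEven_map_augment hn⟩
end

section
/- Every binary doubly even self-dual code of length 40 has minimum weight 4 or 8; that is, every such code contains a nonzero codeword of weight at most 8, and hence of weight exactly 4 or exactly 8. -/
open Finset

/-!
Suppose every nonzero word of `C` had weight at least 12. Since `C` is its own dual, no nonzero
vector orthogonal to `C` is supported on at most 11 coordinates, so `C` maps onto `𝔽₂^S` for every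
set `S` of at most 11 coordinates, with fibres of equal size. Counting pairs (codeword, `t`-subset
of its support) then shows that the binomial moments `∑_{x ∈ C} (wt x choose t)`, `t ≤ 8`, are `|C|`
times those of `Bin(40, 1/2)`, and so is the sum over `C` of any polynomial of degree at most 8 in
the weight. Besides 0 and 40 (the all-ones word lies in `C`) the only weights are 12, 16, 20, 24,
28; `testPoly` vanishes there and has mean zero under `Bin(40, 1/2)`, yet
`testPoly 0 + testPoly 40 ≠ 0`.
-/

section
variable {n : ℕ}

lemma wt_eq_zero_iff {x : Fin n → ZMod 2} : wt x = 0 ↔ x = 0 := by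
  simp [wt, funext_iff, filter_eq_empty_iff]

lemma sum_eq_wt (x : Fin n → ZMod 2) : ∑ i, x i = wt x := by
  rw [wt, ← sum_filter_ne_zero, card_eq_sum_ones, Nat.cast_sum]
  refine sum_congr rfl fun i hi => ?_
  have h : ∀ a : ZMod 2, a ≠ 0 → a = 1 := by decide
  rw [Nat.cast_one, h _ (mem_filter.1 hi).2]

lemma wt_add_one (x : Fin n → ZMod 2) : wt (x + 1) = n - wt x := by
  have : univ.filter (fun i => (x + 1) i ≠ 0) = univ \ univ.filter (fun i => x i ≠ 0) := by
    rw [← filter_not]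
    refine filter_congr fun i _ => ?_
    simp only [Pi.add_apply, Pi.one_apply]
    generalize x i = a
    revert a; decide
  rw [wt, this, card_sdiff_of_subset (filter_subset _ _), card_univ, Fintype.card_fin, wt]

lemma one_mem_dualCode {C : Submodule (ZMod 2) (Fin n → ZMod 2)}
    (hC : ∀ x ∈ C, Even (wt x)) : 1 ∈ dualCode C := by
  intro y hy
  simp only [Pi.one_apply, one_mul, sum_eq_wt]
  exact ZMod.natCast_eq_zero_iff_even.2 (hC y hy)

theorem map_funLeft_coe_eq_top {C : Submodule (ZMod 2) (Fin n → ZMod 2)} {S : Finset (Fin n)}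
    (hS : ∀ x ∈ dualCode C, x ≠ 0 → #S < wt x) :
    C.map (LinearMap.funLeft (ZMod 2) (ZMod 2) ((↑) : S → Fin n)) = ⊤ := by
  set L := LinearMap.funLeft (ZMod 2) (ZMod 2) ((↑) : S → Fin n)
  by_contra hne
  obtain ⟨f, hf0, hfC⟩ :=
    Submodule.exists_dual_map_eq_bot_of_lt_top (lt_top_iff_ne_top.2 hne) inferInstance
  let e (i : S) : S → ZMod 2 := fun j => if i = j then 1 else 0
  -- `f`, read as a vector supported on `S`, is orthogonal to `C`
  let c (j : Fin n) : ZMod 2 := if h : j ∈ S then f (e ⟨j, h⟩) else 0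
  have hc_dual : c ∈ dualCode C := by
    intro y hy
    have hfy : f (L y) = 0 := by
      have := Submodule.mem_map_of_mem (f := f) (Submodule.mem_map_of_mem (f := L) hy)
      rwa [hfC, Submodule.mem_bot] at this
    calc ∑ j, c j * y j = ∑ i : S, c i * y i := by
          rw [← sum_subset (subset_univ S) fun j _ hj => by simp [c, hj]]
          exact (sum_coe_sort S fun j => c j * y j).symm
      _ = f (L y) := by
          rw [LinearMap.pi_apply_eq_sum_univ f]
          simp [c, e, L, mul_comm]
      _ = 0 := hfy
  have hc_ne : c ≠ 0 := by
    contrapose! hf0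
    refine LinearMap.ext fun v => ?_
    rw [LinearMap.pi_apply_eq_sum_univ f v]
    refine sum_eq_zero fun i _ => ?_
    simpa [c] using congrArg (v i • ·) (congrFun hf0 i)
  have hc_wt : wt c ≤ #S := card_le_card fun j hj => by
    by_contra hjS
    simp [c, hjS] at hj
  exact (hS c hc_dual hc_ne).not_ge hc_wt

theorem two_pow_card_mul_card_filter_forall_ne_zero {C : Submodule (ZMod 2) (Fin n → ZMod 2)}
    [Fintype C] {S : Finset (Fin n)} (hS : ∀ x ∈ dualCode C, x ≠ 0 → #S < wt x) :
    2 ^ #S * #{x : C | ∀ i ∈ S, (x : Fin n → ZMod 2) i ≠ 0} = Fintype.card C := by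
  let ψ := ((LinearMap.funLeft (ZMod 2) (ZMod 2) ((↑) : S → Fin n)).domRestrict C).toAddMonoidHom
  have hψ : Function.Surjective ψ := LinearMap.range_eq_top.1 <|
    (LinearMap.range_domRestrict C _).trans (map_funLeft_coe_eq_top hS)
  have hfiber_one :
      #{x : C | ∀ i ∈ S, (x : Fin n → ZMod 2) i ≠ 0} = #{x : C | ψ x = 1} := by
    have h : ∀ a : ZMod 2, a ≠ 0 ↔ a = 1 := by decide
    congr 1
    ext x
    simp [ψ, h, funext_iff]
  calc 2 ^ #S * #{x : C | ∀ i ∈ S, (x : Fin n → ZMod 2) i ≠ 0}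
      = ∑ ε : S → ZMod 2, #{x : C | ψ x = ε} := by
        rw [hfiber_one, sum_congr rfl fun ε _ =>
          AddMonoidHom.card_fiber_eq_of_mem_range ψ (hψ ε) (hψ 1)]
        simp
    _ = Fintype.card C := (card_eq_sum_card_fiberwise fun x _ => mem_univ (ψ x)).symm

theorem two_pow_mul_sum_choose_wt {C : Submodule (ZMod 2) (Fin n → ZMod 2)} [Fintype C] {t : ℕ}
    (ht : ∀ x ∈ dualCode C, x ≠ 0 → t < wt x) :
    2 ^ t * ∑ x : C, (wt (x : Fin n → ZMod 2)).choose t = n.choose t * Fintype.card C := by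
  let r (x : C) (S : Finset (Fin n)) : Prop := ∀ i ∈ S, (x : Fin n → ZMod 2) i ≠ 0
  have hchoose (x : C) :
      (wt (x : Fin n → ZMod 2)).choose t = #((powersetCard t univ).bipartiteAbove r x) := by
    rw [wt, ← card_powersetCard]
    congr 1
    ext S
    simp [r, mem_powersetCard, subset_iff, and_comm]
  calc 2 ^ t * ∑ x : C, (wt (x : Fin n → ZMod 2)).choose t
      = ∑ S ∈ powersetCard t univ, 2 ^ #S * #(univ.bipartiteBelow r S) := by
        simp_rw [hchoose, sum_card_bipartiteAbove_eq_sum_card_bipartiteBelow, mul_sum]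
        exact sum_congr rfl fun S hS => by rw [(mem_powersetCard.1 hS).2]
    _ = ∑ S ∈ powersetCard t univ, Fintype.card C := sum_congr rfl fun S hS =>
        two_pow_card_mul_card_filter_forall_ne_zero fun x hx hx0 =>
          (mem_powersetCard.1 hS).2 ▸ ht x hx hx0
    _ = n.choose t * Fintype.card C := by simp

theorem two_pow_mul_sum_sum_choose_wt {C : Submodule (ZMod 2) (Fin n → ZMod 2)} [Fintype C]
    (a : ℕ → ℤ) {k : ℕ} (hk : ∀ x ∈ dualCode C, x ≠ 0 → k < wt x) :
    2 ^ k * ∑ x : C, ∑ t ∈ range (k + 1), a t * (wt (x : Fin n → ZMod 2)).choose t =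
      Fintype.card C * ∑ t ∈ range (k + 1), a t * n.choose t * 2 ^ (k - t) := by
  rw [sum_comm, mul_sum, mul_sum]
  refine sum_congr rfl fun t ht => ?_
  have htk : t ≤ k := Nat.lt_succ_iff.1 (mem_range.1 ht)
  have hmoment : (2 : ℤ) ^ t * ∑ x : C, ((wt (x : Fin n → ZMod 2)).choose t : ℤ) =
      n.choose t * Fintype.card C := by
    exact_mod_cast two_pow_mul_sum_choose_wt fun x hx hx0 => htk.trans_lt (hk x hx hx0)
  calc (2 : ℤ) ^ k * ∑ x : C, a t * (wt (x : Fin n → ZMod 2)).choose t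
      = a t * 2 ^ (k - t) * (2 ^ t * ∑ x : C, ((wt (x : Fin n → ZMod 2)).choose t : ℤ)) := by
        rw [← mul_sum, ← pow_sub_mul_pow 2 htk]
        ring
    _ = Fintype.card C * (a t * n.choose t * 2 ^ (k - t)) := by
        rw [hmoment]
        ring

end

/-- `315 * testPoly w = u²(u² - 16)(u² - 64)(8u² - 977)` with `u = w - 20`, in the binomial
basis. -/
def testPolyCoeff : ℕ → ℤ
  | 0 => 364216320
  | 1 => -139811139
  | 2 => 48430278
  | 3 => -14839812
  | 4 => 3913848
  | 5 => -853720
  | 6 => 144528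
  | 7 => -16896
  | 8 => 1024
  | _ => 0

def testPoly (w : ℕ) : ℤ := ∑ t ∈ range 9, testPolyCoeff t * w.choose t

lemma sum_testPolyCoeff_mul_choose_forty :
    ∑ t ∈ range 9, testPolyCoeff t * (40 : ℕ).choose t * 2 ^ (8 - t) = 0 := by
  decide

lemma testPoly_eq_zero {w : ℕ} (h12 : 12 ≤ w) (h28 : w ≤ 28) (h4 : 4 ∣ w) : testPoly w = 0 := by
  obtain rfl | rfl | rfl | rfl | rfl : w = 12 ∨ w = 16 ∨ w = 20 ∨ w = 24 ∨ w = 28 := by omega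
  all_goals decide

lemma testPoly_zero_add_testPoly_forty_ne_zero : testPoly 0 + testPoly 40 ≠ 0 := by
  decide

section
variable {C : Submodule (ZMod 2) (Fin 40 → ZMod 2)}

theorem sum_testPoly_wt_eq_zero [Fintype C] (hC : ∀ x ∈ dualCode C, x ≠ 0 → 8 < wt x) :
    ∑ x : C, testPoly (wt (x : Fin 40 → ZMod 2)) = 0 := by
  have h := two_pow_mul_sum_sum_choose_wt testPolyCoeff hC
  rw [sum_testPolyCoeff_mul_choose_forty, mul_zero] at h
  simpa [testPoly] using h

theorem sum_testPoly_wt_eq [Fintype C] (hDE : isDoublyEven C) (hone : 1 ∈ C)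
    (h12 : ∀ x ∈ C, x ≠ 0 → 12 ≤ wt x) :
    ∑ x : C, testPoly (wt (x : Fin 40 → ZMod 2)) = testPoly 0 + testPoly 40 := by
  have hwt_one : wt (1 : Fin 40 → ZMod 2) = 40 := by
    simpa [wt_eq_zero_iff.2 rfl] using wt_add_one (0 : Fin 40 → ZMod 2)
  refine (Fintype.sum_eq_add ⟨0, C.zero_mem⟩ ⟨1, hone⟩ (by simp) fun x hx => ?_).trans ?_
  · have hx0 : (x : Fin 40 → ZMod 2) ≠ 0 := fun h => hx.1 (Subtype.ext h)
    have hcompl := h12 _ (C.add_mem x.2 hone) fun h => hx.2 (Subtype.ext (CharTwo.add_eq_zero.1 h))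
    rw [wt_add_one] at hcompl
    exact testPoly_eq_zero (h12 x x.2 hx0) (by omega) (hDE x x.2)
  · simp [wt_eq_zero_iff.2 rfl, hwt_one]

theorem exists_wt_le_eight (hSD : isSelfDual C) (hDE : isDoublyEven C) :
    ∃ x ∈ C, x ≠ 0 ∧ wt x ≤ 8 := by
  classical
  have hone : 1 ∈ C :=
    hSD ▸ one_mem_dualCode fun x hx => even_iff_two_dvd.2 ((dvd_mul_right 2 2).trans (hDE x hx))
  by_contra! h
  have h12 : ∀ x ∈ C, x ≠ 0 → 12 ≤ wt x := fun x hx hx0 => by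
    have := h x hx hx0
    have := hDE x hx
    omega
  have := sum_testPoly_wt_eq_zero (hSD ▸ h)
  rw [sum_testPoly_wt_eq hDE hone h12] at this
  exact testPoly_zero_add_testPoly_forty_ne_zero this

end

theorem minWt_eq_four_or_eight {n : ℕ} {C : Submodule (ZMod 2) (Fin n → ZMod 2)}
    (hDE : isDoublyEven C) {x : Fin n → ZMod 2} (hx : x ∈ C) (hx0 : x ≠ 0) (hx8 : wt x ≤ 8) :
    minWt C = 4 ∨ minWt C = 8 := by
  have hmem : wt x ∈ {w | ∃ x ∈ C, x ≠ 0 ∧ wt x = w} := ⟨x, hx, hx0, rfl⟩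
  obtain ⟨y, hy, hy0, hy_wt⟩ := Nat.sInf_mem ⟨_, hmem⟩
  change wt y = minWt C at hy_wt
  have hle : minWt C ≤ wt x := Nat.sInf_le hmem
  have hpos : wt y ≠ 0 := fun h => hy0 (wt_eq_zero_iff.1 h)
  have hdvd := hDE y hy
  omega

/-- Every binary doubly even self-dual code of length 40 contains a nonzero codeword of
weight at most 8, and has minimum weight exactly 4 or exactly 8. -/
theorem min_weight_doubly_even_self_dual_length_40
    (C : Submodule (ZMod 2) (Fin 40 → ZMod 2))
    (hSD : isSelfDual C) (hDE : isDoublyEven C) :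
    (∃ x ∈ C, x ≠ 0 ∧ wt x ≤ 8) ∧ (minWt C = 4 ∨ minWt C = 8) := by
  obtain ⟨x, hx, hx0, hx8⟩ := exists_wt_le_eight hSD hDE
  exact ⟨⟨x, hx, hx0, hx8⟩, minWt_eq_four_or_eight hDE hx hx0 hx8⟩
end

section
/- Let C be a binary doubly even self-dual code of length n₁ + n₂ containing a codeword x of weight n₁. Let C₂ (resp. C₁) be the shortened code of C on the support (resp. on the complement of the support) of x. Then C₁ and C₂ are doubly even codes containing the all-one vector, there exists an isometry f : C₁^⊥/C₁ → C₂^⊥/C₂, defined by f(x₁ + C₁) = π'(c) + C₂ where c ∈ C satisfies π(c) = x₁ (with π, π' the projections onto the complement of the support of x and onto the support of x, respectively), and D(C₁, C₂, f) is equivalent to C. -/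
open Finset

/-- The quotient `C^⊥ / C` (with `C` viewed inside its dual code). -/
abbrev resQuot {n : ℕ} (C : Submodule (ZMod 2) (Fin n → ZMod 2)) :=
  ↥(dualCode C) ⧸ Submodule.comap (dualCode C).subtype C

/-- A bijective linear map `f : C₁^⊥/C₁ → C₂^⊥/C₂` is an isometry if
`q_{C₁} = q_{C₂} ∘ f`, i.e. whenever `y ∈ C₂^⊥` represents the image under `f` of the
class of `x ∈ C₁^⊥`, we have `wt x / 2 ≡ wt y / 2 (mod 2)`. -/
def IsIsometry {n₁ n₂ : ℕ} {C₁ : Submodule (ZMod 2) (Fin n₁ → ZMod 2)}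
    {C₂ : Submodule (ZMod 2) (Fin n₂ → ZMod 2)}
    (f : resQuot C₁ ≃ₗ[ZMod 2] resQuot C₂) : Prop :=
  ∀ (x : ↥(dualCode C₁)) (y : ↥(dualCode C₂)),
    f (Submodule.Quotient.mk x) = Submodule.Quotient.mk y →
      wt x.1 / 2 ≡ wt y.1 / 2 [MOD 2]

/-- The set `D(C₁, C₂, f) = {(x₁, x₂) | x₁ ∈ C₁^⊥, x₂ ∈ f(x₁ + C₁)}`. -/
def DSet {n₁ n₂ : ℕ} (C₁ : Submodule (ZMod 2) (Fin n₁ → ZMod 2))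
    (C₂ : Submodule (ZMod 2) (Fin n₂ → ZMod 2))
    (f : resQuot C₁ ≃ₗ[ZMod 2] resQuot C₂) : Set (Fin (n₁ + n₂) → ZMod 2) :=
  {z | ∃ (x : ↥(dualCode C₁)) (y : ↥(dualCode C₂)),
    f (Submodule.Quotient.mk x) = Submodule.Quotient.mk y ∧ z = Fin.append x.1 y.1}

/-- Restriction (projection) to a set of coordinates, given by an indexing function. -/
def restr {N m : ℕ} (e : Fin m → Fin N) : (Fin N → ZMod 2) →ₗ[ZMod 2] (Fin m → ZMod 2) :=
  LinearMap.funLeft (ZMod 2) (ZMod 2) e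

/-- Equivalence of sets of vectors: one is obtained from the other by permuting
coordinates. -/
def setCodeEquiv {n : ℕ} (s t : Set (Fin n → ZMod 2)) : Prop :=
  ∃ σ : Equiv.Perm (Fin n), (permMap σ) '' s = t

/-!
Write `π`, `π'` for the restrictions to the support of `x` and to its complement. Because `C` is
self-dual, the dual of a shortened code is the corresponding projection of `C`:
`C₁^⊥ = π(C)` and `C₂^⊥ = π'(C)`. For `c ∈ C` we have `π(c) ∈ C₁ ↔ π'(c) ∈ C₂` (subtract the
codeword that agrees with `c` on one side and vanishes on the other), so `c ↦ π(c) + C₁` and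
`c ↦ π'(c) + C₂` are surjections from `C` with the same kernel, and `f` is the induced
isomorphism. Every pair `(x₁, x₂)` with `x₂ ∈ f(x₁ + C₁)` is then `(π(c), π'(c))` for some
`c ∈ C`, which identifies `D(C₁, C₂, f)` with `C` up to a permutation of coordinates; and
`wt x₁ + wt x₂ = wt c ≡ 0 (mod 4)` with both weights even, as `x₁, x₂` are orthogonal to the
all-one vectors, which is the isometry condition.
-/

lemma dualCode_eq_orthogonal {n : ℕ} (C : Submodule (ZMod 2) (Fin n → ZMod 2)) :
    dualCode C = (Matrix.toBilin' (1 : Matrix (Fin n) (Fin n) (ZMod 2))).orthogonal C := by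
  ext x
  simp [dualCode, LinearMap.BilinForm.mem_orthogonal_iff, Matrix.toBilin'_apply', dotProduct,
    mul_comm]

lemma dualCode_dualCode {n : ℕ} (C : Submodule (ZMod 2) (Fin n → ZMod 2)) :
    dualCode (dualCode C) = C := by
  rw [dualCode_eq_orthogonal, dualCode_eq_orthogonal]
  refine LinearMap.BilinForm.orthogonal_orthogonal ?_ ?_ C
  · exact LinearMap.BilinForm.nondegenerate_toBilin'_of_det_ne_zero' _ (by simp)
  · intro x y h
    simpa [Matrix.toBilin'_apply', dotProduct, mul_comm] using h

@[simp]
lemma wt_zero {n : ℕ} : wt (0 : Fin n → ZMod 2) = 0 := by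
  simp [wt]

lemma natCast_wt {n : ℕ} (v : Fin n → ZMod 2) : (wt v : ZMod 2) = ∑ i, v i := by
  rw [wt, Finset.natCast_card_filter]
  exact Finset.sum_congr rfl fun i _ => by generalize v i = a; revert a; decide

lemma two_dvd_wt_of_mem_dualCode {n : ℕ} {D : Submodule (ZMod 2) (Fin n → ZMod 2)}
    (hD : (fun _ => 1 : Fin n → ZMod 2) ∈ D) {z : Fin n → ZMod 2} (hz : z ∈ dualCode D) :
    2 ∣ wt z := by
  rw [← ZMod.natCast_eq_zero_iff, natCast_wt]
  simpa using hz _ hD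

lemma allOnes_mem_of_dualCode_eq {n : ℕ} {C : Submodule (ZMod 2) (Fin n → ZMod 2)}
    (hSD : dualCode C = C) (hC : ∀ c ∈ C, 2 ∣ wt c) : (fun _ => 1 : Fin n → ZMod 2) ∈ C := by
  rw [← hSD]
  intro c hc
  simpa [natCast_wt] using (ZMod.natCast_eq_zero_iff _ 2).mpr (hC c hc)

theorem LinearMap.exists_linearEquiv_apply_eq_of_ker_eq {R M Q₁ Q₂ : Type*} [Ring R]
    [AddCommGroup M] [AddCommGroup Q₁] [AddCommGroup Q₂] [Module R M] [Module R Q₁] [Module R Q₂]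
    (φ₁ : M →ₗ[R] Q₁) (φ₂ : M →ₗ[R] Q₂) (h₁ : Function.Surjective φ₁)
    (h₂ : Function.Surjective φ₂) (hker : ker φ₁ = ker φ₂) :
    ∃ f : Q₁ ≃ₗ[R] Q₂, ∀ m, f (φ₁ m) = φ₂ m :=
  ⟨(φ₁.quotKerEquivOfSurjective h₁).symm.trans
      ((Submodule.quotEquivOfEq _ _ hker).trans (φ₂.quotKerEquivOfSurjective h₂)),
    fun m => by
      have : (φ₁.quotKerEquivOfSurjective h₁).symm (φ₁ m) = Submodule.Quotient.mk m :=
        (LinearEquiv.symm_apply_eq _).mpr rfl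
      rw [LinearEquiv.trans_apply, this]
      rfl⟩

section Splitting

variable {N n₁ n₂ : ℕ} (σ : Fin n₁ ⊕ Fin n₂ ≃ Fin N)

abbrev swapBlocks : Fin n₂ ⊕ Fin n₁ ≃ Fin N := (Equiv.sumComm _ _).trans σ

lemma sum_eq_sum_inl_add_sum_inr {M : Type*} [AddCommMonoid M] (g : Fin N → M) :
    ∑ i, g i = ∑ k, g (σ (.inl k)) + ∑ k, g (σ (.inr k)) := by
  rw [← σ.sum_comp, Fintype.sum_sum_type]

lemma wt_eq_wt_restr_add_wt_restr (v : Fin N → ZMod 2) :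
    wt v = wt (restr (σ ∘ .inl) v) + wt (restr (σ ∘ .inr) v) := by
  simp only [wt, Finset.card_filter]
  exact sum_eq_sum_inl_add_sum_inr σ _

lemma sum_mul_eq_sum_mul_restr_add (a b : Fin N → ZMod 2) :
    ∑ i, a i * b i = ∑ k, restr (σ ∘ .inl) a k * restr (σ ∘ .inl) b k
      + ∑ k, restr (σ ∘ .inr) a k * restr (σ ∘ .inr) b k :=
  sum_eq_sum_inl_add_sum_inr σ _

lemma exists_restr_inl_eq_and_restr_inr_eq_zero (z : Fin n₁ → ZMod 2) :
    ∃ w, restr (σ ∘ .inl) w = z ∧ restr (σ ∘ .inr) w = 0 :=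
  ⟨fun i => Sum.elim z 0 (σ.symm i), by ext; simp [restr], by ext; simp [restr]⟩

lemma dualCode_map_restr (C : Submodule (ZMod 2) (Fin N → ZMod 2)) :
    dualCode (C.map (restr (σ ∘ .inl))) =
      (dualCode C ⊓ LinearMap.ker (restr (σ ∘ .inr))).map (restr (σ ∘ .inl)) := by
  ext z
  constructor
  · intro hz
    obtain ⟨w, hw₁, hw₂⟩ := exists_restr_inl_eq_and_restr_inr_eq_zero σ z
    refine ⟨w, ⟨fun c hc => ?_, hw₂⟩, hw₁⟩
    rw [sum_mul_eq_sum_mul_restr_add σ, hw₁, hw₂]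
    simpa using hz _ ⟨c, hc, rfl⟩
  · rintro ⟨d, ⟨hd, hd₂⟩, rfl⟩ _ ⟨c, hc, rfl⟩
    have h := hd c hc
    rw [sum_mul_eq_sum_mul_restr_add σ, LinearMap.mem_ker.mp hd₂] at h
    simpa using h

def shortenedCode (C : Submodule (ZMod 2) (Fin N → ZMod 2)) :
    Submodule (ZMod 2) (Fin n₁ → ZMod 2) :=
  (C ⊓ LinearMap.ker (restr (σ ∘ .inr))).map (restr (σ ∘ .inl))

variable {σ} {C : Submodule (ZMod 2) (Fin N → ZMod 2)}

lemma mem_shortenedCode {z : Fin n₁ → ZMod 2} :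
    z ∈ shortenedCode σ C ↔ ∃ c ∈ C, restr (σ ∘ .inr) c = 0 ∧ restr (σ ∘ .inl) c = z := by
  simp [shortenedCode, and_assoc]

lemma isDoublyEven_shortenedCode (hC : isDoublyEven C) : isDoublyEven (shortenedCode σ C) := by
  intro z hz
  obtain ⟨c, hc, hc₂, rfl⟩ := mem_shortenedCode.mp hz
  have h := wt_eq_wt_restr_add_wt_restr σ c
  rw [hc₂, wt_zero, add_zero] at h
  exact h ▸ hC c hc

lemma dualCode_shortenedCode (hSD : dualCode C = C) :
    dualCode (shortenedCode σ C) = C.map (restr (σ ∘ .inl)) := by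
  rw [← dualCode_dualCode (C.map _), dualCode_map_restr, hSD]
  rfl

lemma restr_inl_mem_dualCode_shortenedCode (hSD : dualCode C = C) {c : Fin N → ZMod 2}
    (hc : c ∈ C) : restr (σ ∘ .inl) c ∈ dualCode (shortenedCode σ C) := by
  rw [dualCode_shortenedCode hSD]
  exact Submodule.mem_map_of_mem hc

lemma restr_inr_mem_shortenedCode {c : Fin N → ZMod 2} (hc : c ∈ C)
    (h : restr (σ ∘ .inl) c ∈ shortenedCode σ C) :
    restr (σ ∘ .inr) c ∈ shortenedCode (swapBlocks σ) C := by
  obtain ⟨d, hd, hd₂, hd₁⟩ := mem_shortenedCode.mp h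
  refine mem_shortenedCode.mpr ⟨c - d, C.sub_mem hc hd, ?_, ?_⟩
  · change restr (σ ∘ .inl) (c - d) = 0
    rw [map_sub, hd₁, sub_self]
  · change restr (σ ∘ .inr) (c - d) = _
    rw [map_sub, hd₂, sub_zero]

lemma restr_inl_mem_shortenedCode_iff {c : Fin N → ZMod 2} (hc : c ∈ C) :
    restr (σ ∘ .inl) c ∈ shortenedCode σ C ↔
      restr (σ ∘ .inr) c ∈ shortenedCode (swapBlocks σ) C :=
  ⟨restr_inr_mem_shortenedCode hc, restr_inr_mem_shortenedCode (σ := swapBlocks σ) hc⟩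

lemma permMap_append_restr (σ : Fin n₁ ⊕ Fin n₂ ≃ Fin (n₁ + n₂)) (c : Fin (n₁ + n₂) → ZMod 2) :
    permMap (σ.symm.trans finSumFinEquiv)
      (Fin.append (restr (σ ∘ .inl) c) (restr (σ ∘ .inr) c)) = c := by
  ext i
  obtain ⟨k | k, rfl⟩ := σ.surjective i <;> simp [permMap, restr]

end Splitting

section Gluing

variable {N n₁ n₂ : ℕ} {σ : Fin n₁ ⊕ Fin n₂ ≃ Fin N} {C : Submodule (ZMod 2) (Fin N → ZMod 2)}

variable (σ) in
def restrClass (hSD : dualCode C = C) : C →ₗ[ZMod 2] resQuot (shortenedCode σ C) :=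
  (Submodule.comap (dualCode _).subtype _).mkQ ∘ₗ
    LinearMap.codRestrict _ (restr (σ ∘ .inl) ∘ₗ C.subtype)
      fun c => restr_inl_mem_dualCode_shortenedCode hSD c.2

lemma restrClass_surjective (hSD : dualCode C = C) :
    Function.Surjective (restrClass σ hSD) := by
  intro q
  obtain ⟨⟨z, hz⟩, rfl⟩ := Submodule.Quotient.mk_surjective _ q
  rw [dualCode_shortenedCode hSD] at hz
  obtain ⟨c, hc, rfl⟩ := hz
  exact ⟨⟨c, hc⟩, rfl⟩

lemma mem_ker_restrClass (hSD : dualCode C = C) {c : C} :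
    c ∈ LinearMap.ker (restrClass σ hSD) ↔ restr (σ ∘ .inl) c.1 ∈ shortenedCode σ C :=
  Submodule.Quotient.mk_eq_zero _

variable (σ) in
def IsGluing
    (f : resQuot (shortenedCode σ C) ≃ₗ[ZMod 2] resQuot (shortenedCode (swapBlocks σ) C)) :
    Prop :=
  ∀ c ∈ C, ∀ (h₁ : restr (σ ∘ .inl) c ∈ dualCode (shortenedCode σ C))
    (h₂ : restr (σ ∘ .inr) c ∈ dualCode (shortenedCode (swapBlocks σ) C)),
    f (Submodule.Quotient.mk ⟨_, h₁⟩) = Submodule.Quotient.mk ⟨_, h₂⟩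

theorem exists_isGluing (hSD : dualCode C = C) :
    ∃ f : resQuot (shortenedCode σ C) ≃ₗ[ZMod 2] resQuot (shortenedCode (swapBlocks σ) C),
      IsGluing σ f := by
  obtain ⟨f, hf⟩ := LinearMap.exists_linearEquiv_apply_eq_of_ker_eq
    (restrClass σ hSD) (restrClass (swapBlocks σ) hSD)
    (restrClass_surjective hSD) (restrClass_surjective hSD) <| by
      ext c
      rw [mem_ker_restrClass, mem_ker_restrClass]
      exact restr_inl_mem_shortenedCode_iff c.2
  exact ⟨f, fun c hc _ _ => hf ⟨c, hc⟩⟩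

variable {f : resQuot (shortenedCode σ C) ≃ₗ[ZMod 2] resQuot (shortenedCode (swapBlocks σ) C)}

lemma exists_mem_restr_eq_of_apply_mk_eq (hSD : dualCode C = C) (hf : IsGluing σ f)
    {x₁ : dualCode (shortenedCode σ C)} {y : dualCode (shortenedCode (swapBlocks σ) C)}
    (h : f (Submodule.Quotient.mk x₁) = Submodule.Quotient.mk y) :
    ∃ c ∈ C, restr (σ ∘ .inl) c = x₁ ∧ restr (σ ∘ .inr) c = y := by
  obtain ⟨c, hc, hcx⟩ : x₁.1 ∈ C.map (restr (σ ∘ .inl)) := dualCode_shortenedCode hSD ▸ x₁.2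
  obtain rfl : x₁ = ⟨_, restr_inl_mem_dualCode_shortenedCode hSD hc⟩ := Subtype.ext hcx.symm
  rw [hf c hc _ (restr_inl_mem_dualCode_shortenedCode (σ := swapBlocks σ) hSD hc),
    Submodule.Quotient.eq] at h
  obtain ⟨d, hd, hd₁, hd₂⟩ := mem_shortenedCode.mp h
  refine ⟨c - d, C.sub_mem hc hd, ?_, ?_⟩
  · rw [map_sub, show restr (σ ∘ .inl) d = 0 from hd₁, sub_zero]
  · rw [map_sub, show restr (σ ∘ .inr) d = _ from hd₂, Submodule.subtype_apply,
      Submodule.coe_sub, sub_sub_cancel]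

lemma isIsometry_of_isGluing (hSD : dualCode C = C) (hDE : isDoublyEven C)
    (h1₁ : (fun _ => 1 : Fin n₁ → ZMod 2) ∈ shortenedCode σ C)
    (h1₂ : (fun _ => 1 : Fin n₂ → ZMod 2) ∈ shortenedCode (swapBlocks σ) C)
    (hf : IsGluing σ f) : IsIsometry f := by
  intro x₁ y h
  obtain ⟨c, hc, hc₁, hc₂⟩ := exists_mem_restr_eq_of_apply_mk_eq hSD hf h
  have hsplit := wt_eq_wt_restr_add_wt_restr σ c
  rw [hc₁, hc₂] at hsplit
  have h₄ := hDE c hc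
  have h₂x := two_dvd_wt_of_mem_dualCode h1₁ x₁.2
  have h₂y := two_dvd_wt_of_mem_dualCode h1₂ y.2
  unfold Nat.ModEq
  omega

lemma setCodeEquiv_DSet {σ : Fin n₁ ⊕ Fin n₂ ≃ Fin (n₁ + n₂)}
    {C : Submodule (ZMod 2) (Fin (n₁ + n₂) → ZMod 2)} (hSD : dualCode C = C)
    {f : resQuot (shortenedCode σ C) ≃ₗ[ZMod 2] resQuot (shortenedCode (swapBlocks σ) C)}
    (hf : IsGluing σ f) : setCodeEquiv (DSet _ _ f) C := by
  refine ⟨σ.symm.trans finSumFinEquiv, Set.ext fun w => ⟨?_, fun hw => ?_⟩⟩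
  · rintro ⟨_, ⟨x₁, y, h, rfl⟩, rfl⟩
    obtain ⟨c, hc, hc₁, hc₂⟩ := exists_mem_restr_eq_of_apply_mk_eq hSD hf h
    rw [← hc₁, ← hc₂, permMap_append_restr]
    exact hc
  · exact ⟨_, ⟨⟨_, restr_inl_mem_dualCode_shortenedCode hSD hw⟩,
      ⟨_, restr_inl_mem_dualCode_shortenedCode (σ := swapBlocks σ) hSD hw⟩, hf w hw _ _, rfl⟩,
      permMap_append_restr σ w⟩

end Gluing

theorem doubly_even_self_dual_is_DSet_general {n₁ n₂ : ℕ}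
    (C : Submodule (ZMod 2) (Fin (n₁ + n₂) → ZMod 2))
    (hSD : isSelfDual C) (hDE : isDoublyEven C)
    (x : Fin (n₁ + n₂) → ZMod 2) (hx : x ∈ C)
    (e₁ : Fin n₁ ≃ {i : Fin (n₁ + n₂) // x i ≠ 0})
    (e₂ : Fin n₂ ≃ {i : Fin (n₁ + n₂) // x i = 0})
    (C₁ : Submodule (ZMod 2) (Fin n₁ → ZMod 2))
    (C₂ : Submodule (ZMod 2) (Fin n₂ → ZMod 2))
    (hC₁ : C₁ = Submodule.map (restr fun k => (e₁ k).1)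
      (C ⊓ LinearMap.ker (restr fun k => (e₂ k).1)))
    (hC₂ : C₂ = Submodule.map (restr fun k => (e₂ k).1)
      (C ⊓ LinearMap.ker (restr fun k => (e₁ k).1))) :
    isDoublyEven C₁ ∧ isDoublyEven C₂ ∧
    (fun _ => 1 : Fin n₁ → ZMod 2) ∈ C₁ ∧ (fun _ => 1 : Fin n₂ → ZMod 2) ∈ C₂ ∧
    (∀ c ∈ C, restr (fun k => (e₁ k).1) c ∈ dualCode C₁ ∧
      restr (fun k => (e₂ k).1) c ∈ dualCode C₂) ∧
    ∃ f : resQuot C₁ ≃ₗ[ZMod 2] resQuot C₂, IsIsometry f ∧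
      (∀ c ∈ C, ∀ (h₁ : restr (fun k => (e₁ k).1) c ∈ dualCode C₁)
          (h₂ : restr (fun k => (e₂ k).1) c ∈ dualCode C₂),
        f (Submodule.Quotient.mk ⟨restr (fun k => (e₁ k).1) c, h₁⟩)
          = Submodule.Quotient.mk ⟨restr (fun k => (e₂ k).1) c, h₂⟩) ∧
      setCodeEquiv (DSet C₁ C₂ f) ↑C := by
  let σ : Fin n₁ ⊕ Fin n₂ ≃ Fin (n₁ + n₂) :=
    (Equiv.sumComm _ _).trans ((e₂.sumCongr e₁).trans (Equiv.sumCompl fun i => x i = 0))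
  obtain rfl : C₁ = shortenedCode σ C := hC₁
  obtain rfl : C₂ = shortenedCode (swapBlocks σ) C := hC₂
  have hx₁ : restr (σ ∘ .inl) x = fun _ => 1 :=
    funext fun k => Fin.eq_one_of_ne_zero _ (e₁ k).2
  have hx₂ : restr (σ ∘ .inr) x = 0 := funext fun k => (e₂ k).2
  have h1 : (fun _ => 1) ∈ C :=
    allOnes_mem_of_dualCode_eq hSD fun c hc => (dvd_trans ⟨2, rfl⟩ (hDE c hc))
  have h1₁ : (fun _ => 1) ∈ shortenedCode σ C := mem_shortenedCode.mpr ⟨x, hx, hx₂, hx₁⟩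
  have h1₂ : (fun _ => 1) ∈ shortenedCode (swapBlocks σ) C :=
    mem_shortenedCode.mpr ⟨x + fun _ => 1, C.add_mem hx h1,
      show restr (σ ∘ .inl) (x + _) = 0 by
        rw [map_add, hx₁]; ext; exact CharTwo.add_self_eq_zero 1,
      show restr (σ ∘ .inr) (x + _) = _ by rw [map_add, hx₂, zero_add]; rfl⟩
  obtain ⟨f, hf⟩ := exists_isGluing (σ := σ) hSD
  exact ⟨isDoublyEven_shortenedCode hDE, isDoublyEven_shortenedCode hDE, h1₁, h1₂,
    fun c hc => ⟨restr_inl_mem_dualCode_shortenedCode hSD hc,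
      restr_inl_mem_dualCode_shortenedCode (σ := swapBlocks σ) hSD hc⟩,
    f, isIsometry_of_isGluing hSD hDE h1₁ h1₂ hf, hf, setCodeEquiv_DSet hSD hf⟩

/-- Let `C` be a doubly even self-dual code of length `n₁ + n₂` containing a codeword `x`
of weight `n₁`; let `C₁` (resp. `C₂`) be the shortened code of `C` on the complement of
the support (resp. on the support) of `x`, realized on `Fin n₁` (resp. `Fin n₂`) via the
enumerations `e₁` of the support and `e₂` of its complement. Then `C₁` and `C₂` are doubly
even codes containing the all-one vector, the projections of `C` land in `C₁^⊥` and
`C₂^⊥`, and there is an isometry `f : C₁^⊥/C₁ → C₂^⊥/C₂`, given on classes by mapping the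
projection of a codeword of `C` to the support of `x` to its projection to the complement,
such that `D(C₁, C₂, f)` is equivalent to `C`. -/
theorem doubly_even_self_dual_is_DSet {n₁ n₂ : ℕ}
    (C : Submodule (ZMod 2) (Fin (n₁ + n₂) → ZMod 2))
    (hSD : isSelfDual C) (hDE : isDoublyEven C)
    (x : Fin (n₁ + n₂) → ZMod 2) (hx : x ∈ C) (hwt : wt x = n₁)
    (e₁ : Fin n₁ ≃ {i : Fin (n₁ + n₂) // x i ≠ 0})
    (e₂ : Fin n₂ ≃ {i : Fin (n₁ + n₂) // x i = 0})
    (C₁ : Submodule (ZMod 2) (Fin n₁ → ZMod 2))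
    (C₂ : Submodule (ZMod 2) (Fin n₂ → ZMod 2))
    (hC₁ : C₁ = Submodule.map (restr fun k => (e₁ k).1)
      (C ⊓ LinearMap.ker (restr fun k => (e₂ k).1)))
    (hC₂ : C₂ = Submodule.map (restr fun k => (e₂ k).1)
      (C ⊓ LinearMap.ker (restr fun k => (e₁ k).1))) :
    isDoublyEven C₁ ∧ isDoublyEven C₂ ∧
    (fun _ => 1 : Fin n₁ → ZMod 2) ∈ C₁ ∧ (fun _ => 1 : Fin n₂ → ZMod 2) ∈ C₂ ∧
    (∀ c ∈ C, restr (fun k => (e₁ k).1) c ∈ dualCode C₁ ∧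
      restr (fun k => (e₂ k).1) c ∈ dualCode C₂) ∧
    ∃ f : resQuot C₁ ≃ₗ[ZMod 2] resQuot C₂, IsIsometry f ∧
      (∀ c ∈ C, ∀ (h₁ : restr (fun k => (e₁ k).1) c ∈ dualCode C₁)
          (h₂ : restr (fun k => (e₂ k).1) c ∈ dualCode C₂),
        f (Submodule.Quotient.mk ⟨restr (fun k => (e₁ k).1) c, h₁⟩)
          = Submodule.Quotient.mk ⟨restr (fun k => (e₂ k).1) c, h₂⟩) ∧
      setCodeEquiv (DSet C₁ C₂ f) ↑C :=
  doubly_even_self_dual_is_DSet_general C hSD hDE x hx e₁ e₂ C₁ C₂ hC₁ hC₂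
end

section
/- For i = 1, 2, let C_i be a binary doubly even code of length n_i containing the all-one vector, let f : C₁^⊥/C₁ → C₂^⊥/C₂ be an isometry, and for i = 1, 2 let σ_i be the linear automorphism of C_i^⊥/C_i induced by an automorphism (coordinate permutation preserving the code) of C_i. Then the codes D(C₁, C₂, f) and D(C₁, C₂, σ₂ ∘ f ∘ σ₁) are equivalent. -/
/-!
The automorphisms `τ₁, τ₂` inducing `σ₁, σ₂` give the coordinate permutation `τ₁⁻¹ ⊕ τ₂` of
`Fin (n₁ + n₂)`, which sends `(x₁, x₂) ∈ D(C₁, C₂, f)` to `(τ₁⁻¹ x₁, τ₂ x₂)`. Since `σ₁` sends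
the class of `τ₁⁻¹ x₁` to that of `x₁` and `σ₂` sends the class of `x₂` to that of `τ₂ x₂`,
the image lies in `D(C₁, C₂, σ₂ ∘ f ∘ σ₁)`. The same argument for `τ₁ ⊕ τ₂⁻¹`, with the
inverses of `σ₁, σ₂`, gives the reverse inclusion.
-/

open Finset

section

variable {n n₁ n₂ : ℕ}

@[simp]
lemma permMap_apply (σ : Equiv.Perm (Fin n)) (x : Fin n → ZMod 2) (i : Fin n) :
    permMap σ x i = x (σ i) := rfl

@[simp]
lemma permMap_inv_permMap (σ : Equiv.Perm (Fin n)) (x : Fin n → ZMod 2) :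
    permMap σ⁻¹ (permMap σ x) = x := by
  ext; simp

@[simp]
lemma permMap_permMap_inv (σ : Equiv.Perm (Fin n)) (x : Fin n → ZMod 2) :
    permMap σ (permMap σ⁻¹ x) = x := by
  simpa using permMap_inv_permMap σ⁻¹ x

lemma map_permMap_inv_eq {C : Submodule (ZMod 2) (Fin n → ZMod 2)} {σ : Equiv.Perm (Fin n)}
    (h : C.map (permMap σ) = C) : C.map (permMap σ⁻¹) = C := by
  conv_lhs => rw [← h, ← Submodule.map_comp]
  convert Submodule.map_id C
  exact LinearMap.ext (permMap_inv_permMap σ)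

lemma permMap_mem_dualCode_map {C : Submodule (ZMod 2) (Fin n → ZMod 2)} (σ : Equiv.Perm (Fin n))
    {x : Fin n → ZMod 2} (hx : x ∈ dualCode C) : permMap σ x ∈ dualCode (C.map (permMap σ)) := by
  rintro _ ⟨y, hy, rfl⟩
  rw [← hx y hy]
  exact Fintype.sum_equiv σ _ _ fun _ => rfl

lemma permMap_mem_dualCode {C : Submodule (ZMod 2) (Fin n → ZMod 2)} {σ : Equiv.Perm (Fin n)}
    (h : C.map (permMap σ) = C) {x : Fin n → ZMod 2} (hx : x ∈ dualCode C) :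
    permMap σ x ∈ dualCode C :=
  h ▸ permMap_mem_dualCode_map σ hx

def IsInducedByPerm {C : Submodule (ZMod 2) (Fin n → ZMod 2)} (σ : resQuot C ≃ₗ[ZMod 2] resQuot C)
    (τ : Equiv.Perm (Fin n)) : Prop :=
  ∀ u v : dualCode C, permMap τ u.1 = v.1 → σ (Submodule.Quotient.mk u) = Submodule.Quotient.mk v

lemma IsInducedByPerm.symm {C : Submodule (ZMod 2) (Fin n → ZMod 2)}
    {σ : resQuot C ≃ₗ[ZMod 2] resQuot C} {τ : Equiv.Perm (Fin n)} (h : IsInducedByPerm σ τ) :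
    IsInducedByPerm σ.symm τ⁻¹ := by
  intro u v huv
  rw [LinearEquiv.symm_apply_eq]
  exact (h v u (by rw [← huv, permMap_permMap_inv])).symm

def permAppend (ρ₁ : Equiv.Perm (Fin n₁)) (ρ₂ : Equiv.Perm (Fin n₂)) : Equiv.Perm (Fin (n₁ + n₂)) :=
  finSumFinEquiv.permCongr (ρ₁.sumCongr ρ₂)

lemma permAppend_inv (ρ₁ : Equiv.Perm (Fin n₁)) (ρ₂ : Equiv.Perm (Fin n₂)) :
    (permAppend ρ₁ ρ₂)⁻¹ = permAppend ρ₁⁻¹ ρ₂⁻¹ :=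
  rfl

lemma permMap_permAppend_append (ρ₁ : Equiv.Perm (Fin n₁)) (ρ₂ : Equiv.Perm (Fin n₂))
    (x : Fin n₁ → ZMod 2) (y : Fin n₂ → ZMod 2) :
    permMap (permAppend ρ₁ ρ₂) (Fin.append x y) = Fin.append (permMap ρ₁ x) (permMap ρ₂ y) := by
  ext i
  refine Fin.addCases (fun k => ?_) (fun k => ?_) i <;> simp [permAppend, Equiv.permCongr_apply]

lemma image_permAppend_DSet_subset {C₁ : Submodule (ZMod 2) (Fin n₁ → ZMod 2)}
    {C₂ : Submodule (ZMod 2) (Fin n₂ → ZMod 2)} (f : resQuot C₁ ≃ₗ[ZMod 2] resQuot C₂)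
    {τ₁ : Equiv.Perm (Fin n₁)} {τ₂ : Equiv.Perm (Fin n₂)}
    (hτ₁ : C₁.map (permMap τ₁) = C₁) (hτ₂ : C₂.map (permMap τ₂) = C₂)
    {σ₁ : resQuot C₁ ≃ₗ[ZMod 2] resQuot C₁} {σ₂ : resQuot C₂ ≃ₗ[ZMod 2] resQuot C₂}
    (hσ₁ : IsInducedByPerm σ₁ τ₁) (hσ₂ : IsInducedByPerm σ₂ τ₂) :
    permMap (permAppend τ₁ τ₂) '' DSet C₁ C₂ f ⊆ DSet C₁ C₂ (σ₁.symm ≪≫ₗ f ≪≫ₗ σ₂) := by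
  rintro _ ⟨_, ⟨x, y, hxy, rfl⟩, rfl⟩
  let x' : dualCode C₁ := ⟨permMap τ₁ x, permMap_mem_dualCode hτ₁ x.2⟩
  let y' : dualCode C₂ := ⟨permMap τ₂ y, permMap_mem_dualCode hτ₂ y.2⟩
  refine ⟨x', y', ?_, permMap_permAppend_append τ₁ τ₂ x y⟩
  have hx' : σ₁.symm (Submodule.Quotient.mk x') = Submodule.Quotient.mk x :=
    σ₁.symm_apply_eq.2 (hσ₁ x x' rfl).symm
  simp [hx', hxy, hσ₂ y y' rfl]

end

theorem DSet_equiv_of_automorphisms_general {n₁ n₂ : ℕ}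
    (C₁ : Submodule (ZMod 2) (Fin n₁ → ZMod 2))
    (C₂ : Submodule (ZMod 2) (Fin n₂ → ZMod 2))
    (f : resQuot C₁ ≃ₗ[ZMod 2] resQuot C₂)
    (τ₁ : Equiv.Perm (Fin n₁)) (hτ₁ : Submodule.map (permMap τ₁) C₁ = C₁)
    (τ₂ : Equiv.Perm (Fin n₂)) (hτ₂ : Submodule.map (permMap τ₂) C₂ = C₂)
    (σ₁ : resQuot C₁ ≃ₗ[ZMod 2] resQuot C₁)
    (hσ₁ : ∀ (u v : ↥(dualCode C₁)), permMap τ₁ u.1 = v.1 →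
      σ₁ (Submodule.Quotient.mk u) = Submodule.Quotient.mk v)
    (σ₂ : resQuot C₂ ≃ₗ[ZMod 2] resQuot C₂)
    (hσ₂ : ∀ (u v : ↥(dualCode C₂)), permMap τ₂ u.1 = v.1 →
      σ₂ (Submodule.Quotient.mk u) = Submodule.Quotient.mk v) :
    setCodeEquiv (DSet C₁ C₂ f) (DSet C₁ C₂ (σ₁ ≪≫ₗ f ≪≫ₗ σ₂)) := by
  set g := σ₁ ≪≫ₗ f ≪≫ₗ σ₂
  set π := permAppend τ₁⁻¹ τ₂
  have forward : permMap π '' DSet C₁ C₂ f ⊆ DSet C₁ C₂ g := by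
    simpa [g] using image_permAppend_DSet_subset f (map_permMap_inv_eq hτ₁) hτ₂
      (IsInducedByPerm.symm hσ₁) hσ₂
  have backward : permMap π⁻¹ '' DSet C₁ C₂ g ⊆ DSet C₁ C₂ f := by
    have hf : σ₁.symm ≪≫ₗ g ≪≫ₗ σ₂.symm = f := by ext; simp [g]
    rw [permAppend_inv, inv_inv]
    simpa [hf] using image_permAppend_DSet_subset g hτ₁ (map_permMap_inv_eq hτ₂) hσ₁
      (IsInducedByPerm.symm hσ₂)
  exact ⟨π, forward.antisymm fun z hz => ⟨_, backward ⟨z, hz, rfl⟩, permMap_permMap_inv π z⟩⟩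

/-- If `f : C₁^⊥/C₁ → C₂^⊥/C₂` is an isometry and `σ₁, σ₂` are the linear automorphisms
of `C₁^⊥/C₁`, `C₂^⊥/C₂` induced by coordinate-permutation automorphisms `τ₁, τ₂` of
`C₁, C₂`, then `D(C₁, C₂, f)` and `D(C₁, C₂, σ₂ ∘ f ∘ σ₁)` are equivalent. -/
theorem DSet_equiv_of_automorphisms {n₁ n₂ : ℕ}
    (C₁ : Submodule (ZMod 2) (Fin n₁ → ZMod 2))
    (C₂ : Submodule (ZMod 2) (Fin n₂ → ZMod 2))
    (hDE₁ : isDoublyEven C₁) (hDE₂ : isDoublyEven C₂)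
    (hone₁ : (fun _ => 1 : Fin n₁ → ZMod 2) ∈ C₁)
    (hone₂ : (fun _ => 1 : Fin n₂ → ZMod 2) ∈ C₂)
    (f : resQuot C₁ ≃ₗ[ZMod 2] resQuot C₂) (hf : IsIsometry f)
    (τ₁ : Equiv.Perm (Fin n₁)) (hτ₁ : Submodule.map (permMap τ₁) C₁ = C₁)
    (τ₂ : Equiv.Perm (Fin n₂)) (hτ₂ : Submodule.map (permMap τ₂) C₂ = C₂)
    (σ₁ : resQuot C₁ ≃ₗ[ZMod 2] resQuot C₁)
    (hσ₁ : ∀ (u v : ↥(dualCode C₁)), permMap τ₁ u.1 = v.1 →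
      σ₁ (Submodule.Quotient.mk u) = Submodule.Quotient.mk v)
    (σ₂ : resQuot C₂ ≃ₗ[ZMod 2] resQuot C₂)
    (hσ₂ : ∀ (u v : ↥(dualCode C₂)), permMap τ₂ u.1 = v.1 →
      σ₂ (Submodule.Quotient.mk u) = Submodule.Quotient.mk v) :
    setCodeEquiv (DSet C₁ C₂ f) (DSet C₁ C₂ (σ₁ ≪≫ₗ f ≪≫ₗ σ₂)) :=
  DSet_equiv_of_automorphisms_general C₁ C₂ f τ₁ hτ₁ τ₂ hτ₂ σ₁ hσ₁ σ₂ hσ₂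
end
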